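/- In the X3C-to-FMBR reduction, if the X3C instance has a solution (n pairwise-disjoint sets Q_{p1},…,Q_{pn} from the family whose union is U), then there exists a permutation π of the branch-strings such that S1^π is a subsequence of S2 (equivalently, LCS(S1^π, S2) = 3n + 2m + 1). -/

import Mathlib

/-- The alphabet `Σ = {u_1, …, u_{3n}, *, Y, Z}` of the X3C-to-FMBR reduction:
the universe elements (none of which equals `*`, `Y` or `Z`) plus three special
characters. -/
inductive XChar (n : ℕ) : Type where
  | elt : Fin (3 * n) → XChar n
  | star : XChar n
  | Y : XChar n
  | Z : XChar n
deriving DecidableEq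

/-- The `3n + m` branch-strings of `P1`: the `3n` single-character strings
`u_1, …, u_{3n}`, together with `n` copies of `Y*` and `m - n` copies of `YZ`. -/
def branchStrings (n m : ℕ) : List (List (XChar n)) :=
  ((List.finRange (3 * n)).map fun i => [XChar.elt i]) ++
    List.replicate n [XChar.Y, XChar.star] ++
    List.replicate (m - n) [XChar.Y, XChar.Z]

/-- The block `H_i = * · Q_i · Z · Y`, where `Q_i` is written as the concatenation of
its elements in their fixed order. -/
def hBlock {n : ℕ} (Qi : List (Fin (3 * n))) : List (XChar n) :=
  XChar.star :: (Qi.map XChar.elt ++ [XChar.Z, XChar.Y])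

/-- The string `S2 = Y · H_1 ⋯ H_m`. -/
def xS2 (n m : ℕ) (Q : Fin m → List (Fin (3 * n))) : List (XChar n) :=
  XChar.Y :: ((List.finRange m).map fun i => hBlock (Q i)).flatten

/-- Flattening a list of singletons. -/
lemma flatten_map_singleton {α β : Type*} (f : α → β) (l : List α) :
    (l.map fun u => [f u]).flatten = l.map f := by
  induction l with
  | nil => rfl
  | cons a l ih => simp [ih]

/-- The branch-strings placed in front of block `i`. -/
def blockB {n m : ℕ} (Q : Fin m → List (Fin (3 * n))) (p : Fin n → Fin m) (i : Fin m) :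
    List (List (XChar n)) :=
  if ∃ j, p j = i then [XChar.Y, XChar.star] :: (Q i).map (fun u => [XChar.elt u])
  else [[XChar.Y, XChar.Z]]

lemma blockB_sublist {n m : ℕ} (Q : Fin m → List (Fin (3 * n))) (p : Fin n → Fin m)
    (l : List (Fin m)) :
    ((l.map (blockB Q p)).flatten.flatten ++ [XChar.Y]).Sublist
      (XChar.Y :: (l.map fun i => hBlock (Q i)).flatten) := by
  induction l with
  | nil => simp
  | cons i l ih =>
    by_cases h : ∃ j, p j = i
    · simp only [List.map_cons, List.flatten_cons, List.flatten_append, blockB, if_pos h,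
        hBlock, flatten_map_singleton, List.cons_append, List.append_assoc, List.nil_append]
      exact List.Sublist.cons₂ _ (List.Sublist.cons₂ _
        (((ih.cons XChar.Z)).append_left ((Q i).map XChar.elt)))
    · simp only [List.map_cons, List.flatten_cons, List.flatten_append, blockB, if_neg h,
        hBlock, List.cons_append, List.append_assoc, List.nil_append, List.flatten_nil]
      exact List.Sublist.cons₂ _ (List.Sublist.cons _
        ((List.Sublist.cons₂ _ ih).trans
          (List.sublist_append_right ((Q i).map XChar.elt) _)))

lemma blockB_perm {n m : ℕ} (Q : Fin m → List (Fin (3 * n))) (p : Fin n → Fin m)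
    (l : List (Fin m)) :
    ((l.map (blockB Q p)).flatten).Perm
      (((l.filter fun i => decide (∃ j, p j = i)).map
          fun i => (Q i).map fun u => [XChar.elt u]).flatten
        ++ List.replicate (l.countP fun i => decide (∃ j, p j = i))
            [XChar.Y, XChar.star]
        ++ List.replicate (l.countP fun i => decide ¬ (∃ j, p j = i))
            [XChar.Y, XChar.Z]) := by
  induction l with
  | nil => simp
  | cons i l ih =>
    rw [← Multiset.coe_eq_coe] at ih ⊢
    by_cases h : ∃ j, p j = i
    · simp only [List.map_cons, List.flatten_cons, blockB, List.filter_cons,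
        List.countP_cons, h, if_true, decide_true, decide_false, not_true_eq_false,
        if_pos, List.replicate_succ, List.cons_append, ← Multiset.cons_coe,
        ← Multiset.coe_add, ← Multiset.singleton_add, add_zero] at ih ⊢
      rw [ih]; abel
    · simp only [List.map_cons, List.flatten_cons, blockB, List.filter_cons,
        List.countP_cons, h, if_false, decide_true, decide_false, not_false_eq_true,
        Bool.false_eq_true, Bool.true_eq_false, if_true, List.replicate_succ, List.cons_append, List.flatten_nil, List.nil_append,
        ← Multiset.cons_coe, ← Multiset.coe_add, ← Multiset.singleton_add, add_zero] at ih ⊢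
      rw [ih]; abel

/-- If the X3C instance has a solution — `n` indices `p_1 < ⋯ < p_n` whose sets cover
the universe `U` (hence are pairwise disjoint) — then there is a permutation `π` of
the branch-strings such that `S1^π` is a subsequence of `S2`. -/
theorem x3c_solution_implies_sublist (n m : ℕ) (hnm : n < m)
    (Q : Fin m → List (Fin (3 * n)))
    (hQlen : ∀ i, (Q i).length = 3) (hQnodup : ∀ i, (Q i).Nodup)
    (p : Fin n → Fin m) (hp : StrictMono p)
    (hcover : ∀ u : Fin (3 * n), ∃ j : Fin n, u ∈ Q (p j)) :
    ∃ B : List (List (XChar n)), B.Perm (branchStrings n m) ∧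
      (B.flatten ++ [XChar.Y]).Sublist (xS2 n m Q) := by
  classical
  refine ⟨((List.finRange m).map (blockB Q p)).flatten, ?_, ?_⟩
  · -- permutation part
    have hfil : ((List.finRange m).filter fun i => decide (∃ j, p j = i)).Perm
        ((List.finRange n).map p) := by
      apply List.Subperm.antisymm
      · apply List.subperm_of_subset ((List.nodup_finRange m).filter _)
        intro x hx
        simp only [List.mem_filter, decide_eq_true_eq] at hx
        obtain ⟨j, rfl⟩ := hx.2
        exact List.mem_map_of_mem (f := p) (List.mem_finRange j)
      · apply List.subperm_of_subset ((List.nodup_finRange n).map hp.injective)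
        intro x hx
        simp only [List.mem_map] at hx
        obtain ⟨j, -, rfl⟩ := hx
        simp [List.mem_filter, List.mem_finRange]
    have hcount : ((List.finRange m).countP fun i => decide (∃ j, p j = i)) = n := by
      rw [List.countP_eq_length_filter, hfil.length_eq, List.length_map,
        List.length_finRange]
    have hcount' : ((List.finRange m).countP fun i => decide ¬ (∃ j, p j = i)) = m - n := by
      have key : ∀ l : List (Fin m),
          (l.countP fun i => decide (∃ j, p j = i)) +
            (l.countP fun i => decide ¬ (∃ j, p j = i)) = l.length := by
        intro l
        induction l with
        | nil => rfl
        | cons a l ihl =>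
          by_cases h : ∃ j, p j = a <;>
            simp only [List.countP_cons, h, decide_true, decide_false, not_true_eq_false,
              not_false_eq_true, Bool.false_eq_true, Bool.true_eq_false, if_true, if_false,
              List.length_cons] <;> omega
      have := key (List.finRange m)
      rw [List.length_finRange, hcount] at this
      omega
    -- the union of the chosen sets is a permutation of all the elements
    set L : List (Fin (3 * n)) := ((List.finRange n).map fun j => Q (p j)).flatten with hL
    have hLlen : L.length = 3 * n := by
      have key : ∀ l : List (Fin n),
          (List.map (List.length ∘ fun j => Q (p j)) l).sum = 3 * l.length := by
        intro l
        induction l with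
        | nil => simp
        | cons a l ihl =>
          simp only [List.map_cons, List.sum_cons, ihl, Function.comp_apply, hQlen,
            List.length_cons]
          ring
      rw [hL, List.length_flatten, List.map_map, key, List.length_finRange]
    have hLperm : (List.finRange (3 * n)).Perm L := by
      apply List.Subperm.perm_of_length_le
      · apply List.subperm_of_subset (List.nodup_finRange _)
        intro u _
        obtain ⟨j, hj⟩ := hcover u
        rw [hL, List.mem_flatten]
        exact ⟨Q (p j), List.mem_map_of_mem (List.mem_finRange j), hj⟩
      · rw [hLlen, List.length_finRange]
    -- assemble
    refine (blockB_perm Q p (List.finRange m)).trans ?_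
    rw [hcount, hcount']
    unfold branchStrings
    refine List.Perm.append (List.Perm.append ?_ (List.Perm.refl _)) (List.Perm.refl _)
    have h1 : ((((List.finRange m).filter fun i => decide (∃ j, p j = i)).map
        fun i => (Q i).map fun u => [XChar.elt u]).flatten).Perm
        ((((List.finRange n).map p).map fun i => (Q i).map fun u => [XChar.elt u]).flatten) :=
      (hfil.map _).flatten
    refine h1.trans ?_
    have h2 : (((List.finRange n).map p).map fun i => (Q i).map fun u => [XChar.elt u]).flatten
        = L.map fun u => [XChar.elt u] := by
      rw [hL, List.map_flatten, List.map_map, List.map_map]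
      rfl
    rw [h2]
    exact (hLperm.map fun u => [XChar.elt u]).symm
  · -- sublist part
    exact blockB_sublist Q p (List.finRange m)
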